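/- arXiv:math/0401406 — 4 statements merged into one kernel-verified Lean document; each statement's English description precedes it below -/
import Mathlib

section
/- The double integral ∬_{[0,1]^2} (1−x)/((1+xy)·ln(xy)) dx dy converges and equals −ln(4/π); equivalently, ln(4/π) = −∬_{[0,1]^2} (1−x)/((1+xy)·ln(xy)) dx dy. -/
/-!
Put `u = xy` on the open unit square, where the negated integrand is nonnegative. Expanding
`1 / (1 + u) = (1 - u) ∑ₖ u^(2k)` and writing `u^(2k) / (-log u) = ∫_{2k}^∞ u^s ds` turns it into
a series of integrals of `(1 - x)(1 - xy)(xy)^s`, and Tonelli lets us integrate over the square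
first. That double integral is the rational function
`B(s) = 1/((s+1)²(s+2)) - 1/((s+2)²(s+3))`, and `∫_{2k}^∞ B` equals
`1/(2k+1) - 1/(2k+2) - log((2k+2)²/((2k+1)(2k+3)))`. Summing over `k`, the rational parts give
`log 2` (via harmonic numbers) and the logarithms give `log (π/2)` by Wallis' product.
-/

open MeasureTheory Real Set Filter Topology

lemma integral_Ioo_zero_one_rpow {a : ℝ} (ha : -1 < a) :
    ∫ x in Ioo (0:ℝ) 1, x ^ a = (a + 1)⁻¹ := by
  rw [← integral_Ioc_eq_integral_Ioo, ← intervalIntegral.integral_of_le zero_le_one,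
    integral_rpow (Or.inl ha), one_rpow, zero_rpow (by linarith), sub_zero, one_div]

lemma integrableOn_Ioo_zero_one_rpow_sub_rpow {a : ℝ} (ha : -1 < a) :
    IntegrableOn (fun x : ℝ => x ^ a - x ^ (a + 1)) (Ioo 0 1) :=
  ((intervalIntegral.integrableOn_Ioo_rpow_iff zero_lt_one).2 ha).sub
    ((intervalIntegral.integrableOn_Ioo_rpow_iff zero_lt_one).2 (by linarith))

lemma integral_Ioo_zero_one_rpow_sub_rpow {a : ℝ} (ha : -1 < a) :
    ∫ x in Ioo (0:ℝ) 1, (x ^ a - x ^ (a + 1)) = (a + 1)⁻¹ - (a + 2)⁻¹ := by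
  rw [integral_sub ((intervalIntegral.integrableOn_Ioo_rpow_iff zero_lt_one).2 ha)
      ((intervalIntegral.integrableOn_Ioo_rpow_iff zero_lt_one).2 (by linarith)),
    integral_Ioo_zero_one_rpow ha, integral_Ioo_zero_one_rpow (by linarith)]
  ring_nf

lemma IntegrableOn.mul_prod {α β : Type*} [MeasurableSpace α] [MeasurableSpace β]
    {μ : Measure α} {ν : Measure β} [SFinite μ] [SFinite ν] {L : Type*} [NormedRing L]
    {f : α → L} {g : β → L} {s : Set α} {t : Set β} (hf : IntegrableOn f s μ) (hg : IntegrableOn g t ν) :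
    IntegrableOn (fun p : α × β => f p.1 * g p.2) (s ×ˢ t) (μ.prod ν) := by
  rw [IntegrableOn, ← Measure.prod_restrict]
  exact Integrable.mul_prod hf hg

noncomputable def squareMoment (s : ℝ) : ℝ :=
  ((s + 1) ^ 2 * (s + 2))⁻¹ - ((s + 2) ^ 2 * (s + 3))⁻¹

lemma integral_unitSquare_one_sub_mul_one_sub_mul_rpow {s : ℝ} (hs : -1 < s) :
    IntegrableOn (fun p : ℝ × ℝ => (1 - p.1) * (1 - p.1 * p.2) * (p.1 * p.2) ^ s)
        (Ioo 0 1 ×ˢ Ioo 0 1) ∧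
      ∫ p in Ioo (0:ℝ) 1 ×ˢ Ioo (0:ℝ) 1, (1 - p.1) * (1 - p.1 * p.2) * (p.1 * p.2) ^ s =
        squareMoment s := by
  have hS : MeasurableSet (Ioo (0:ℝ) 1 ×ˢ Ioo (0:ℝ) 1) :=
    measurableSet_Ioo.prod measurableSet_Ioo
  have hs1 : -1 < s + 1 := by linarith
  set φ : ℝ → ℝ → ℝ := fun a x => x ^ a - x ^ (a + 1)
  have hsplit : ∀ p ∈ Ioo (0:ℝ) 1 ×ˢ Ioo (0:ℝ) 1,
      (1 - p.1) * (1 - p.1 * p.2) * (p.1 * p.2) ^ s =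
        φ s p.1 * p.2 ^ s - φ (s + 1) p.1 * p.2 ^ (s + 1) := by
    rintro ⟨x, y⟩ ⟨⟨hx, -⟩, hy, -⟩
    simp only [φ, mul_rpow hx.le hy.le, rpow_add hx, rpow_add hy, rpow_one]
    ring
  have hint : ∀ a, -1 < a → IntegrableOn (fun p : ℝ × ℝ => φ a p.1 * p.2 ^ a)
      (Ioo 0 1 ×ˢ Ioo 0 1) := fun a ha =>
    IntegrableOn.mul_prod (μ := volume) (ν := volume)
      (integrableOn_Ioo_zero_one_rpow_sub_rpow ha)
      ((intervalIntegral.integrableOn_Ioo_rpow_iff zero_lt_one).2 ha)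
  refine ⟨((hint s hs).sub (hint _ hs1)).congr_fun (fun p hp => (hsplit p hp).symm) hS, ?_⟩
  rw [setIntegral_congr_fun hS hsplit, integral_sub (hint s hs) (hint _ hs1),
    Measure.volume_eq_prod, setIntegral_prod_mul (φ s) (· ^ s),
    setIntegral_prod_mul (φ (s + 1)) (· ^ (s + 1)),
    integral_Ioo_zero_one_rpow_sub_rpow hs, integral_Ioo_zero_one_rpow_sub_rpow hs1,
    integral_Ioo_zero_one_rpow hs, integral_Ioo_zero_one_rpow hs1]
  have : s + 1 ≠ 0 := by linarith
  have : s + 2 ≠ 0 := by linarith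
  have : s + 3 ≠ 0 := by linarith
  rw [squareMoment, show s + 1 + 1 = s + 2 by ring, show s + 1 + 2 = s + 3 by ring]
  field_simp
  ring

noncomputable def squareMomentPrimitive (t : ℝ) : ℝ :=
  -(t + 1)⁻¹ + (t + 2)⁻¹ - log (t + 1) + 2 * log (t + 2) - log (t + 3)

lemma hasDerivAt_squareMomentPrimitive {t : ℝ} (ht : -1 < t) :
    HasDerivAt squareMomentPrimitive (squareMoment t) t := by
  have h1 : t + 1 ≠ 0 := by linarith
  have h2 : t + 2 ≠ 0 := by linarith
  have h3 : t + 3 ≠ 0 := by linarith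
  have hshift : ∀ c : ℝ, HasDerivAt (· + c) 1 t := fun c => (hasDerivAt_id t).add_const c
  have H := ((((hshift 1).inv h1).neg.add ((hshift 2).inv h2)).sub ((hshift 1).log h1)).add
    (((hshift 2).log h2).const_mul 2) |>.sub ((hshift 3).log h3)
  refine H.congr_deriv ?_
  simp only [squareMoment]
  field_simp
  ring

lemma tendsto_squareMomentPrimitive_atTop : Tendsto squareMomentPrimitive atTop (𝓝 0) := by
  have hinv : ∀ c : ℝ, Tendsto (fun t : ℝ => (t + c)⁻¹) atTop (𝓝 0) := fun c =>
    tendsto_inv_atTop_zero.comp (tendsto_atTop_add_const_right _ c tendsto_id)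
  have H := (((hinv 1).neg.add (hinv 2)).sub (tendsto_log_comp_add_sub_log 1)).add
    ((tendsto_log_comp_add_sub_log 2).const_mul 2) |>.sub (tendsto_log_comp_add_sub_log 3)
  simp only [neg_zero, add_zero, sub_zero, mul_zero] at H
  convert H using 2 with t
  rw [squareMomentPrimitive]
  ring

lemma one_sub_mul_one_sub_mul_rpow_nonneg (s : ℝ) :
    ∀ p ∈ Ioo (0:ℝ) 1 ×ˢ Ioo (0:ℝ) 1, 0 ≤ (1 - p.1) * (1 - p.1 * p.2) * (p.1 * p.2) ^ s := by
  rintro ⟨x, y⟩ ⟨⟨hx0, hx1⟩, hy0, hy1⟩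
  have : x * y < 1 := by nlinarith
  have : 0 ≤ 1 - x := by linarith
  have : 0 ≤ 1 - x * y := by linarith
  positivity

lemma lintegral_unitSquare_one_sub_mul_one_sub_mul_rpow {s : ℝ} (hs : -1 < s) :
    ∫⁻ p in Ioo (0:ℝ) 1 ×ˢ Ioo (0:ℝ) 1,
        ENNReal.ofReal ((1 - p.1) * (1 - p.1 * p.2) * (p.1 * p.2) ^ s) =
      ENNReal.ofReal (squareMoment s) := by
  obtain ⟨hint, hval⟩ := integral_unitSquare_one_sub_mul_one_sub_mul_rpow hs
  rw [← hval, ofReal_integral_eq_lintegral_ofReal hint ((ae_restrict_iff'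
    (measurableSet_Ioo.prod measurableSet_Ioo)).2 (ae_of_all _
      (one_sub_mul_one_sub_mul_rpow_nonneg s)))]

lemma squareMoment_nonneg {s : ℝ} (hs : -1 < s) : 0 ≤ squareMoment s := by
  rw [← (integral_unitSquare_one_sub_mul_one_sub_mul_rpow hs).2]
  exact setIntegral_nonneg (measurableSet_Ioo.prod measurableSet_Ioo)
    (one_sub_mul_one_sub_mul_rpow_nonneg s)

lemma integral_Ioi_squareMoment {t : ℝ} (ht : -1 < t) :
    IntegrableOn squareMoment (Ioi t) ∧
      ∫ s in Ioi t, squareMoment s = -squareMomentPrimitive t := by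
  have hderiv : ∀ s ∈ Ici t, HasDerivAt squareMomentPrimitive (squareMoment s) s := fun s hs =>
    hasDerivAt_squareMomentPrimitive (lt_of_lt_of_le ht hs)
  have hnn : ∀ s ∈ Ioi t, 0 ≤ squareMoment s := fun s hs => squareMoment_nonneg (ht.trans hs)
  refine ⟨integrableOn_Ioi_deriv_of_nonneg' hderiv hnn tendsto_squareMomentPrimitive_atTop, ?_⟩
  rw [integral_Ioi_of_hasDerivAt_of_nonneg' hderiv hnn tendsto_squareMomentPrimitive_atTop,
    zero_sub]

lemma neg_squareMomentPrimitive_nonneg {t : ℝ} (ht : -1 < t) : 0 ≤ -squareMomentPrimitive t := by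
  rw [← (integral_Ioi_squareMoment ht).2]
  exact setIntegral_nonneg measurableSet_Ioi fun s hs => squareMoment_nonneg (ht.trans hs)

lemma lintegral_Ioi_squareMoment {t : ℝ} (ht : -1 < t) :
    ∫⁻ s in Ioi t, ENNReal.ofReal (squareMoment s) =
      ENNReal.ofReal (-squareMomentPrimitive t) := by
  obtain ⟨hint, hval⟩ := integral_Ioi_squareMoment ht
  rw [← hval, ofReal_integral_eq_lintegral_ofReal hint ((ae_restrict_iff' measurableSet_Ioi).2
    (ae_of_all _ fun s hs => squareMoment_nonneg (ht.trans hs)))]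

lemma sum_range_inv_sub_inv_eq_harmonic_sub_harmonic (n : ℕ) :
    ∑ i ∈ Finset.range n, ((2 * i + 1 : ℝ)⁻¹ - (2 * i + 2 : ℝ)⁻¹) =
      harmonic (2 * n) - harmonic n := by
  induction n with
  | zero => simp
  | succ n ih =>
    rw [Finset.sum_range_succ, ih, show 2 * (n + 1) = 2 * n + 1 + 1 by ring, harmonic_succ,
      harmonic_succ, harmonic_succ]
    push_cast
    field_simp
    ring

lemma tendsto_harmonic_two_mul_sub_harmonic :
    Tendsto (fun n : ℕ => (harmonic (2 * n) - harmonic n : ℝ)) atTop (𝓝 (log 2)) := by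
  have h2n : Tendsto (fun n : ℕ => 2 * n) atTop atTop :=
    tendsto_id.const_mul_atTop' two_pos
  have H := ((tendsto_harmonic_sub_log.comp h2n).sub tendsto_harmonic_sub_log).add_const (log 2)
  rw [sub_self, zero_add] at H
  refine H.congr' ?_
  filter_upwards [eventually_ne_atTop 0] with n hn
  simp only [Function.comp, Nat.cast_mul, Nat.cast_ofNat]
  rw [log_mul two_ne_zero (Nat.cast_ne_zero.2 hn)]
  ring

lemma neg_squareMomentPrimitive_eq {t : ℝ} (ht : -1 < t) :
    -squareMomentPrimitive t =
      ((t + 1)⁻¹ - (t + 2)⁻¹) - log ((t + 2) / (t + 1) * ((t + 2) / (t + 3))) := by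
  have h1 : t + 1 ≠ 0 := by linarith
  have h2 : t + 2 ≠ 0 := by linarith
  have h3 : t + 3 ≠ 0 := by linarith
  rw [log_mul (div_ne_zero h2 h1) (div_ne_zero h2 h3), log_div h2 h1, log_div h2 h3,
    squareMomentPrimitive]
  ring

lemma hasSum_neg_squareMomentPrimitive_two_mul :
    HasSum (fun k : ℕ => -squareMomentPrimitive (2 * k)) (log (4 / π)) := by
  have hk : ∀ k : ℕ, -1 < (2 * k : ℝ) := fun k => by linarith [(Nat.cast_nonneg k : (0:ℝ) ≤ k)]
  rw [hasSum_iff_tendsto_nat_of_nonneg fun k => neg_squareMomentPrimitive_nonneg (hk k)]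
  have hwallis := tendsto_prod_pi_div_two.log (by positivity)
  have H := tendsto_harmonic_two_mul_sub_harmonic.sub hwallis
  rw [← log_div two_ne_zero (by positivity), div_div_eq_mul_div, show (2:ℝ) * 2 = 4 by norm_num]
    at H
  refine H.congr fun n => ?_
  rw [log_prod fun i _ => by positivity, ← sum_range_inv_sub_inv_eq_harmonic_sub_harmonic,
    ← Finset.sum_sub_distrib]
  refine Finset.sum_congr rfl fun i _ => ?_
  rw [neg_squareMomentPrimitive_eq (hk i)]

lemma lintegral_Ioi_ofReal_rpow {u : ℝ} (hu0 : 0 < u) (hu1 : u < 1) (c : ℝ) :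
    ∫⁻ s in Ioi c, ENNReal.ofReal (u ^ s) = ENNReal.ofReal (u ^ c / -log u) := by
  have hlog : log u < 0 := log_neg hu0 hu1
  simp_rw [rpow_def_of_pos hu0]
  rw [← ofReal_integral_eq_lintegral_ofReal (integrableOn_exp_mul_Ioi hlog c)
    (ae_of_all _ fun s => (exp_pos _).le), integral_exp_mul_Ioi hlog c, div_neg, neg_div]

lemma hasSum_one_sub_mul_pow_two_mul {u : ℝ} (hu : |u| < 1) :
    HasSum (fun k : ℕ => (1 - u) * u ^ (2 * k)) (1 + u)⁻¹ := by
  have hsq : |u ^ 2| < 1 := by rw [abs_pow]; exact pow_lt_one₀ (abs_nonneg u) hu two_ne_zero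
  have h1 : 1 + u ≠ 0 := by linarith [neg_abs_le u]
  have h2 : 1 - u ≠ 0 := by linarith [le_abs_self u]
  have hval : (1 - u) * (1 - u ^ 2)⁻¹ = (1 + u)⁻¹ := by
    rw [show 1 - u ^ 2 = (1 - u) * (1 + u) by ring]
    field_simp
  simpa only [← pow_mul, hval] using (hasSum_geometric_of_abs_lt_one hsq).mul_left (1 - u)

lemma ofReal_neg_integrand_eq_tsum_lintegral {x y : ℝ} (hx0 : 0 < x) (hx1 : x < 1) (hy0 : 0 < y)
    (hy1 : y < 1) :
    ENNReal.ofReal (-((1 - x) / ((1 + x * y) * log (x * y)))) =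
      ∑' k : ℕ, ∫⁻ s in Ioi (2 * k : ℝ),
        ENNReal.ofReal ((1 - x) * (1 - x * y) * (x * y) ^ s) := by
  set u := x * y
  have hu0 : 0 < u := mul_pos hx0 hy0
  have hu1 : u < 1 := by nlinarith
  have hlog : 0 < -log u := neg_pos.2 (log_neg hu0 hu1)
  have hC : 0 ≤ (1 - x) / -log u := div_nonneg (by linarith) hlog.le
  have hterm : ∀ k : ℕ, ∫⁻ s in Ioi (2 * k : ℝ),
      ENNReal.ofReal ((1 - x) * (1 - u) * u ^ s) =
        ENNReal.ofReal ((1 - x) / -log u * ((1 - u) * u ^ (2 * k))) := by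
    intro k
    have hC' : 0 ≤ (1 - x) * (1 - u) := mul_nonneg (by linarith) (by linarith)
    simp_rw [ENNReal.ofReal_mul hC']
    rw [lintegral_const_mul' _ _ ENNReal.ofReal_ne_top, lintegral_Ioi_ofReal_rpow hu0 hu1,
      ← ENNReal.ofReal_mul hC', show (2 * k : ℝ) = (2 * k : ℕ) by push_cast; rfl, rpow_natCast]
    ring_nf
  have hsum := (hasSum_one_sub_mul_pow_two_mul (abs_lt.2 ⟨by linarith, hu1⟩)).mul_left
    ((1 - x) / -log u)
  simp_rw [hterm]
  rw [← ENNReal.ofReal_tsum_of_nonneg (fun k => by positivity) hsum.summable, hsum.tsum_eq]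
  congr 1
  field_simp

lemma lintegral_unitSquare_ofReal_neg_integrand :
    ∫⁻ p in Ioo (0:ℝ) 1 ×ˢ Ioo (0:ℝ) 1,
        ENNReal.ofReal (-((1 - p.1) / ((1 + p.1 * p.2) * log (p.1 * p.2)))) =
      ENNReal.ofReal (log (4 / π)) := by
  set S := Ioo (0:ℝ) 1 ×ˢ Ioo (0:ℝ) 1
  have hS : MeasurableSet S := measurableSet_Ioo.prod measurableSet_Ioo
  set g : ℝ × ℝ → ℝ → ENNReal := fun p s =>
    ENNReal.ofReal ((1 - p.1) * (1 - p.1 * p.2) * (p.1 * p.2) ^ s)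
  have hg : Measurable (Function.uncurry g) := by
    apply ENNReal.measurable_ofReal.comp
    fun_prop
  have hk : ∀ k : ℕ, -1 < (2 * k : ℝ) := fun k => by linarith [(Nat.cast_nonneg k : (0:ℝ) ≤ k)]
  calc ∫⁻ p in S, ENNReal.ofReal (-((1 - p.1) / ((1 + p.1 * p.2) * log (p.1 * p.2))))
      = ∫⁻ p in S, ∑' k : ℕ, ∫⁻ s in Ioi (2 * k : ℝ), g p s :=
        setLIntegral_congr_fun hS fun p ⟨⟨hx0, hx1⟩, hy0, hy1⟩ =>
          ofReal_neg_integrand_eq_tsum_lintegral hx0 hx1 hy0 hy1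
    _ = ∑' k : ℕ, ∫⁻ s in Ioi (2 * k : ℝ), ∫⁻ p in S, g p s := by
        rw [lintegral_tsum (f := fun (k : ℕ) p => ∫⁻ s in Ioi (2 * k : ℝ), g p s) fun k =>
          (hg.lintegral_prod_right' (ν := volume.restrict (Ioi (2 * k : ℝ)))).aemeasurable]
        exact tsum_congr fun k => lintegral_lintegral_swap hg.aemeasurable
    _ = ∑' k : ℕ, ∫⁻ s in Ioi (2 * k : ℝ), ENNReal.ofReal (squareMoment s) :=
        tsum_congr fun k => setLIntegral_congr_fun measurableSet_Ioi fun s hs =>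
          lintegral_unitSquare_one_sub_mul_one_sub_mul_rpow ((hk k).trans hs)
    _ = ∑' k : ℕ, ENNReal.ofReal (-squareMomentPrimitive (2 * k)) :=
        tsum_congr fun k => lintegral_Ioi_squareMoment (hk k)
    _ = ENNReal.ofReal (log (4 / π)) := by
        rw [← ENNReal.ofReal_tsum_of_nonneg (fun k => neg_squareMomentPrimitive_nonneg (hk k))
          hasSum_neg_squareMomentPrimitive_two_mul.summable,
          hasSum_neg_squareMomentPrimitive_two_mul.tsum_eq]

lemma integrable_and_integral_eq_of_lintegral_ofReal_eq {α : Type*} [MeasurableSpace α]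
    {μ : Measure α} {f : α → ℝ} (hf : AEStronglyMeasurable f μ) (hnn : 0 ≤ᵐ[μ] f) {c : ℝ}
    (hc : 0 ≤ c) (h : ∫⁻ x, ENNReal.ofReal (f x) ∂μ = ENNReal.ofReal c) :
    Integrable f μ ∧ ∫ x, f x ∂μ = c := by
  refine ⟨⟨hf, ?_⟩, ?_⟩
  · rw [hasFiniteIntegral_iff_ofReal hnn, h]
    exact ENNReal.ofReal_lt_top
  · rw [integral_eq_lintegral_of_nonneg_ae hnn hf, h, ENNReal.toReal_ofReal hc]

/-- ∬_{[0,1]²} (1−x)/((1+xy)·ln(xy)) dx dy converges and equals −ln(4/π). -/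
theorem stmt_4 :
    IntegrableOn (fun p : ℝ × ℝ => (1 - p.1) / ((1 + p.1 * p.2) * Real.log (p.1 * p.2)))
        (Set.Ioo 0 1 ×ˢ Set.Ioo 0 1) ∧
      ∫ p in (Set.Ioo (0:ℝ) 1 ×ˢ Set.Ioo (0:ℝ) 1),
          (1 - p.1) / ((1 + p.1 * p.2) * Real.log (p.1 * p.2)) =
        -Real.log (4 / Real.pi) := by
  have hS : MeasurableSet (Ioo (0:ℝ) 1 ×ˢ Ioo (0:ℝ) 1) := measurableSet_Ioo.prod measurableSet_Ioo
  have hnn : ∀ p ∈ Ioo (0:ℝ) 1 ×ˢ Ioo (0:ℝ) 1,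
      0 ≤ -((1 - p.1) / ((1 + p.1 * p.2) * log (p.1 * p.2))) := by
    rintro ⟨x, y⟩ ⟨⟨hx0, hx1⟩, hy0, hy1⟩
    have hlog : log (x * y) < 0 := log_neg (by positivity) (by nlinarith)
    rw [neg_nonneg]
    exact div_nonpos_of_nonneg_of_nonpos (by linarith)
      (mul_nonpos_of_nonneg_of_nonpos (by positivity) hlog.le)
  have hlog4 : 0 ≤ log (4 / π) := log_nonneg <| by rw [le_div_iff₀ pi_pos]; linarith [pi_le_four]
  obtain ⟨hint, hval⟩ := integrable_and_integral_eq_of_lintegral_ofReal_eq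
    (by fun_prop : Measurable _).aestronglyMeasurable ((ae_restrict_iff' hS).2 (ae_of_all _ hnn))
    hlog4 lintegral_unitSquare_ofReal_neg_integrand
  refine ⟨?_, by rw [← hval, integral_neg, neg_neg]⟩
  simpa only [IntegrableOn, Pi.neg_def, neg_neg] using hint.neg
end

section
/- The double series ∑_{n=0}^∞ (1/2^{n+1}) ∑_{k=0}^n (−1)^k · binom(n,k) · ln((k+2)/(k+1)) converges and its sum equals ln(π/2). -/
/-!
Write `a k = (-1) ^ k * log ((k + 2) / (k + 1))` and `s j = ∑ k < j, a k`. By Pascal's rule the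
`N`-th partial sum of the Euler transform `∑ n, 2⁻¹ ^ (n + 1) * ∑ k ≤ n, C(n, k) * a k` is the
binomial mean `2⁻¹ ^ N * ∑ j ≤ N, C(N, j) * s j`. Binomial means are regular, since for fixed `j`
the weight `C(N, j) / 2 ^ N` tends to `0` while the weights sum to `1`. Finally `s j → log (π / 2)`:
the series converges by the alternating series test, and its even partial sums are the
logarithms of the Wallis products.
-/

open Filter Real Finset Topology

noncomputable def binomialMean (c : ℕ → ℝ) (N : ℕ) : ℝ :=
  (∑ j ∈ range (N + 1), (N.choose j : ℝ) * c j) / 2 ^ N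

theorem binomialMean_succ (c : ℕ → ℝ) (N : ℕ) :
    binomialMean c (N + 1) = (binomialMean c N + binomialMean (fun j => c (j + 1)) N) / 2 := by
  simp only [binomialMean, sum_choose_succ_mul (fun i _ => c i) N, pow_succ]
  field_simp

theorem binomialMean_sub_const (c : ℕ → ℝ) (L : ℝ) (N : ℕ) :
    binomialMean c N - L = binomialMean (fun j => c j - L) N := by
  have hsum : ∑ j ∈ range (N + 1), (N.choose j : ℝ) = 2 ^ N := by
    exact_mod_cast N.sum_range_choose
  simp only [binomialMean, mul_sub, sum_sub_distrib, ← sum_mul, hsum]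
  field_simp

theorem tendsto_choose_div_two_pow (j : ℕ) :
    Tendsto (fun N : ℕ => (N.choose j : ℝ) / 2 ^ N) atTop (𝓝 0) := by
  refine squeeze_zero (fun N => by positivity) (fun N => ?_)
    (tendsto_pow_const_div_const_pow_of_one_lt j one_lt_two)
  gcongr
  exact_mod_cast N.choose_le_pow j

theorem tendsto_binomialMean_of_tendsto_zero {c : ℕ → ℝ} (hc : Tendsto c atTop (𝓝 0)) :
    Tendsto (binomialMean c) atTop (𝓝 0) := by
  rw [Metric.tendsto_nhds]
  intro ε hε
  obtain ⟨M, hM⟩ := hc.abs.bddAbove_range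
  have hcM : ∀ j, |c j| ≤ M := fun j => hM ⟨j, rfl⟩
  obtain ⟨K, hK⟩ := eventually_atTop.1 <| hc.abs.eventually <| ge_mem_nhds <|
    show |(0 : ℝ)| < ε / 2 by simpa using half_pos hε
  have hhead : Tendsto (fun N : ℕ => ∑ j ∈ range K, (N.choose j : ℝ) / 2 ^ N * M)
      atTop (𝓝 0) := by
    simpa using tendsto_finsetSum (range K) fun j _ => (tendsto_choose_div_two_pow j).mul_const M
  filter_upwards [hhead.eventually (gt_mem_nhds (half_pos hε)), eventually_ge_atTop K]
    with N hN hKN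
  have hsum : ∑ j ∈ range (N + 1), (N.choose j : ℝ) = 2 ^ N := by
    exact_mod_cast N.sum_range_choose
  have hbound : |∑ j ∈ range (N + 1), (N.choose j : ℝ) * c j|
      ≤ ∑ j ∈ range K, (N.choose j : ℝ) * M + ε / 2 * 2 ^ N := by
    calc |∑ j ∈ range (N + 1), (N.choose j : ℝ) * c j|
        ≤ ∑ j ∈ range (N + 1), (N.choose j : ℝ) * |c j| := by
          refine (abs_sum_le_sum_abs _ _).trans_eq (sum_congr rfl fun j _ => ?_)
          rw [abs_mul, Nat.abs_cast]
      _ = ∑ j ∈ range K, (N.choose j : ℝ) * |c j|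
            + ∑ j ∈ Ico K (N + 1), (N.choose j : ℝ) * |c j| :=
          (sum_range_add_sum_Ico _ (by omega)).symm
      _ ≤ ∑ j ∈ range K, (N.choose j : ℝ) * M
            + ∑ j ∈ range (N + 1), (N.choose j : ℝ) * (ε / 2) := by
          refine add_le_add (sum_le_sum fun j _ => by gcongr; exact hcM j) ?_
          refine (sum_le_sum fun j hj => ?_).trans <| sum_le_sum_of_subset_of_nonneg
            (by rw [range_eq_Ico]; exact Ico_subset_Ico_left K.zero_le) fun j _ _ => by positivity
          gcongr
          exact hK j (mem_Ico.1 hj).1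
      _ = ∑ j ∈ range K, (N.choose j : ℝ) * M + ε / 2 * 2 ^ N := by
          rw [← sum_mul (range (N + 1)), hsum, mul_comm (2 ^ N : ℝ)]
  rw [Real.dist_eq, sub_zero, binomialMean, abs_div, abs_of_pos (by positivity : (0 : ℝ) < 2 ^ N)]
  calc |∑ j ∈ range (N + 1), (N.choose j : ℝ) * c j| / 2 ^ N
      ≤ (∑ j ∈ range K, (N.choose j : ℝ) * M + ε / 2 * 2 ^ N) / 2 ^ N := by gcongr
    _ = ∑ j ∈ range K, (N.choose j : ℝ) / 2 ^ N * M + ε / 2 := by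
      rw [add_div, sum_div, mul_div_cancel_right₀ _ (by positivity)]
      congr 1
      exact sum_congr rfl fun j _ => by ring
    _ < ε := by linarith

theorem Filter.Tendsto.binomialMean {c : ℕ → ℝ} {L : ℝ} (hc : Tendsto c atTop (𝓝 L)) :
    Tendsto (binomialMean c) atTop (𝓝 L) := by
  rw [← tendsto_sub_nhds_zero_iff] at hc ⊢
  simpa only [binomialMean_sub_const] using tendsto_binomialMean_of_tendsto_zero hc

theorem sum_range_eulerTransform_eq_binomialMean (a : ℕ → ℝ) (N : ℕ) :
    ∑ n ∈ range N, (1 / 2 ^ (n + 1) : ℝ) * ∑ k ∈ range (n + 1), (n.choose k : ℝ) * a k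
      = binomialMean (fun j => ∑ k ∈ range j, a k) N := by
  induction N with
  | zero => simp [binomialMean]
  | succ N ih =>
    have hshift : (fun j => ∑ k ∈ range (j + 1), a k) = fun j => ∑ k ∈ range j, a k + a j :=
      funext fun j => sum_range_succ a j
    rw [sum_range_succ, ih, binomialMean_succ, hshift]
    simp only [binomialMean, mul_add, sum_add_distrib, pow_succ]
    field_simp
    ring

theorem tendsto_log_add_two_div_add_one :
    Tendsto (fun k : ℕ => log ((k + 2) / (k + 1))) atTop (𝓝 0) := by
  refine squeeze_zero (fun k => log_nonneg ?_) (fun k => ?_)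
    tendsto_one_div_add_atTop_nhds_zero_nat
  · rw [le_div_iff₀ (by positivity)]; linarith
  · refine (log_le_sub_one_of_pos (by positivity)).trans_eq ?_
    field_simp
    ring

theorem antitone_log_add_two_div_add_one :
    Antitone fun k : ℕ => log ((k + 2) / (k + 1)) := by
  intro k l hkl
  have hkl : (k : ℝ) ≤ l := by exact_mod_cast hkl
  refine log_le_log (by positivity) ?_
  rw [div_le_div_iff₀ (by positivity) (by positivity)]
  linarith

theorem sum_range_two_mul_neg_one_pow_mul_log (m : ℕ) :
    ∑ k ∈ range (2 * m), (-1 : ℝ) ^ k * log ((k + 2) / (k + 1))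
      = log (∏ i ∈ range m, ((2 : ℝ) * i + 2) / (2 * i + 1) * ((2 * i + 2) / (2 * i + 3))) := by
  induction m with
  | zero => simp
  | succ m ih =>
    rw [show 2 * (m + 1) = 2 * m + 1 + 1 by ring, sum_range_succ, sum_range_succ, ih,
      prod_range_succ, log_mul (by positivity) (by positivity),
      log_mul (by positivity) (by positivity), pow_succ, pow_mul, neg_one_sq,
      one_pow, one_mul, one_mul, neg_one_mul, ← log_inv, inv_div]
    push_cast
    ring_nf

theorem tendsto_sum_log_pi_div_two :
    Tendsto (fun n => ∑ k ∈ range n, (-1 : ℝ) ^ k * log ((k + 2) / (k + 1)))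
      atTop (𝓝 (log (π / 2))) := by
  obtain ⟨l, hl⟩ := antitone_log_add_two_div_add_one.tendsto_alternating_series_of_tendsto_zero
    tendsto_log_add_two_div_add_one
  have heven : Tendsto (fun m => ∑ k ∈ range (2 * m), (-1 : ℝ) ^ k * log ((k + 2) / (k + 1)))
      atTop (𝓝 (log (π / 2))) := by
    simp only [sum_range_two_mul_neg_one_pow_mul_log]
    exact ((continuousAt_log (by positivity)).tendsto.comp tendsto_prod_pi_div_two)
  rwa [tendsto_nhds_unique (hl.comp (tendsto_id.const_mul_atTop' two_pos)) heven] at hl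

/-- ∑_{n=0}^∞ (1/2^{n+1}) ∑_{k=0}^n (−1)^k C(n,k) ln((k+2)/(k+1)) converges to ln(π/2). -/
theorem stmt_10 :
    Tendsto (fun N : ℕ => ∑ n ∈ Finset.range N,
        (1 / 2 ^ (n + 1) : ℝ) * ∑ k ∈ Finset.range (n + 1),
          (-1 : ℝ) ^ k * (n.choose k : ℝ) * Real.log ((k + 2) / (k + 1)))
      atTop (nhds (Real.log (Real.pi / 2))) := by
  refine tendsto_sum_log_pi_div_two.binomialMean.congr fun N => ?_
  rw [← sum_range_eulerTransform_eq_binomialMean]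
  exact sum_congr rfl fun n _ => congrArg _ <| sum_congr rfl fun k _ => by ring
end

section
/- For every real t with 0 < t < 1, the series ∑_{n=0}^∞ t^{n+1} ∑_{k=0}^n (−1)^{k+1} · binom(n,k) · ln(k+1) converges and its sum equals −t^2 · ∫_0^1 (1−x)/((1−t·(1−x))·ln x) dx, where the integral converges. -/
open Filter MeasureTheory Real Set

/-!
Differentiating `a ↦ ∫₀¹ (x ^ a - 1) / log x dx` under the integral sign gives
`∫₀¹ x ^ a dx = 1 / (a + 1)`, so this integral equals `log (a + 1)`. Writing each `log (k + 1)`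
this way and using `∑ₖ (-1) ^ k C(n, k) (x ^ k - 1) = (1 - x) ^ n` for `n ≥ 1`, the inner sum
becomes `-∫₀¹ (1 - x) ^ n / log x dx`. As `|(1 - x) ^ n / log x| ≤ 1` on `(0, 1)`, the series
over `n` may be summed under the integral sign, where it is a geometric series in `t (1 - x)`.
-/

lemma integrableOn_Ioo_of_continuousOn_of_abs_le {f : ℝ → ℝ} {a b M : ℝ}
    (hf : ContinuousOn f (Ioo a b)) (hM : ∀ x ∈ Ioo a b, |f x| ≤ M) :
    IntegrableOn f (Ioo a b) :=
  ⟨hf.aestronglyMeasurable measurableSet_Ioo,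
    .restrict_of_bounded (C := M) (by simp [Real.volume_Ioo])
      ((ae_restrict_iff' measurableSet_Ioo).2 (ae_of_all _ hM))⟩

lemma continuousOn_log_Ioo_zero_one : ContinuousOn log (Ioo (0 : ℝ) 1) :=
  continuousOn_log.mono fun _ hx => hx.1.ne'

lemma abs_rpow_sub_one_div_log_le {a x : ℝ} (ha : 0 ≤ a) (hx : x ∈ Ioo 0 1) :
    |(x ^ a - 1) / log x| ≤ a := by
  have hlog : log x < 0 := log_neg hx.1 hx.2
  have hpow : x ^ a ≤ 1 := rpow_le_one hx.1.le hx.2.le ha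
  have hexp : a * log x + 1 ≤ x ^ a := by
    rw [rpow_def_of_pos hx.1, mul_comm]
    exact add_one_le_exp _
  rw [abs_div, abs_of_nonpos (by linarith), abs_of_neg hlog, div_le_iff₀ (by linarith)]
  linarith

lemma continuousOn_rpow_sub_one_div_log (a : ℝ) :
    ContinuousOn (fun x : ℝ => (x ^ a - 1) / log x) (Ioo 0 1) :=
  ((continuousOn_id.rpow_const fun _ hx => .inl hx.1.ne').sub continuousOn_const).div
    continuousOn_log_Ioo_zero_one fun _ hx => (log_neg hx.1 hx.2).ne

lemma integrableOn_rpow_sub_one_div_log {a : ℝ} (ha : 0 ≤ a) :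
    IntegrableOn (fun x : ℝ => (x ^ a - 1) / log x) (Ioo 0 1) :=
  integrableOn_Ioo_of_continuousOn_of_abs_le (continuousOn_rpow_sub_one_div_log a)
    fun _ hx => abs_rpow_sub_one_div_log_le ha hx

lemma integral_Ioo_rpow {a : ℝ} (ha : 0 ≤ a) : ∫ x in Ioo (0 : ℝ) 1, x ^ a = (a + 1)⁻¹ := by
  rw [← integral_Ioc_eq_integral_Ioo, ← intervalIntegral.integral_of_le zero_le_one,
    integral_rpow (.inl (by linarith)), one_rpow, zero_rpow (by linarith), sub_zero, one_div]

lemma hasDerivAt_integral_rpow_sub_one_div_log {a : ℝ} (ha : 0 ≤ a) :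
    HasDerivAt (fun b => ∫ x in Ioo (0 : ℝ) 1, (x ^ b - 1) / log x) (a + 1)⁻¹ a := by
  have hmeas : AEStronglyMeasurable (fun x : ℝ => x ^ a) (volume.restrict (Ioo 0 1)) :=
    (continuousOn_id.rpow_const fun _ hx => .inl hx.1.ne').aestronglyMeasurable measurableSet_Ioo
  -- on the ball of radius 1/2 about a, x ^ b is dominated by the integrable x ^ (a - 1/2)
  have hbound : ∀ᵐ x ∂volume.restrict (Ioo (0 : ℝ) 1), ∀ b ∈ Metric.ball a (1 / 2),
      ‖x ^ b‖ ≤ x ^ (a - 1 / 2) := by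
    refine (ae_restrict_iff' measurableSet_Ioo).2 (ae_of_all _ fun x hx b hb => ?_)
    rw [norm_of_nonneg (rpow_nonneg hx.1.le _)]
    refine rpow_le_rpow_of_exponent_ge hx.1 hx.2.le ?_
    linarith [(abs_lt.1 (mem_ball_iff_norm.1 hb)).1]
  have hderiv : ∀ᵐ x ∂volume.restrict (Ioo (0 : ℝ) 1), ∀ b ∈ Metric.ball a (1 / 2),
      HasDerivAt (fun b => (x ^ b - 1) / log x) (x ^ b) b := by
    refine (ae_restrict_iff' measurableSet_Ioo).2 (ae_of_all _ fun x hx b _ => ?_)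
    have h := ((hasStrictDerivAt_const_rpow hx.1 b).hasDerivAt.sub_const 1).div_const (log x)
    rwa [mul_div_cancel_right₀ _ (log_neg hx.1 hx.2).ne] at h
  have hint : IntegrableOn (fun x : ℝ => x ^ (a - 1 / 2)) (Ioo 0 1) := by
    rw [← intervalIntegrable_iff_integrableOn_Ioo_of_le zero_le_one]
    exact intervalIntegral.intervalIntegrable_rpow' (by linarith)
  have key := hasDerivAt_integral_of_dominated_loc_of_deriv_le
    (Metric.ball_mem_nhds a one_half_pos)
    (Eventually.of_forall fun b => (continuousOn_rpow_sub_one_div_log b).aestronglyMeasurable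
      measurableSet_Ioo)
    (integrableOn_rpow_sub_one_div_log ha) hmeas hbound hint hderiv
  rw [← integral_Ioo_rpow ha]
  exact key.2

lemma integral_rpow_sub_one_div_log {a : ℝ} (ha : 0 ≤ a) :
    ∫ x in Ioo (0 : ℝ) 1, (x ^ a - 1) / log x = log (a + 1) := by
  have hlog : ∀ b : ℝ, 0 ≤ b → HasDerivAt (fun b => log (b + 1)) (b + 1)⁻¹ b := fun b hb => by
    simpa using ((hasDerivAt_id b).add_const 1).log (by positivity)
  refine eq_of_has_deriv_right_eq (a := 0) (b := a)
    (fun b hb => (hasDerivAt_integral_rpow_sub_one_div_log hb.1).hasDerivWithinAt)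
    (fun b hb => (hlog b hb.1).hasDerivWithinAt)
    (fun b hb => (hasDerivAt_integral_rpow_sub_one_div_log hb.1).continuousAt.continuousWithinAt)
    (fun b hb => (hlog b hb.1).continuousAt.continuousWithinAt)
    (by simp) a ⟨ha, le_rfl⟩

lemma sum_neg_one_pow_succ_mul_choose_mul_pow_sub_one {R : Type*} [CommRing R] {n : ℕ}
    (hn : n ≠ 0) (x : R) :
    ∑ k ∈ Finset.range (n + 1), (-1) ^ (k + 1) * (n.choose k : R) * (x ^ k - 1)
      = -(1 - x) ^ n := by
  have hbinom :
      (1 - x) ^ n = ∑ k ∈ Finset.range (n + 1), (-1) ^ k * (n.choose k : R) * x ^ k := by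
    rw [sub_eq_neg_add, add_pow]
    refine Finset.sum_congr rfl fun k _ => ?_
    rw [one_pow, mul_one, neg_pow]
    ring
  have halt : ∑ k ∈ Finset.range (n + 1), (-1) ^ k * (n.choose k : R) = 0 := by
    exact_mod_cast congrArg (Int.cast : ℤ → R) (Int.alternating_sum_range_choose_of_ne hn)
  calc _ = -∑ k ∈ Finset.range (n + 1), (-1) ^ k * (n.choose k : R) * x ^ k
        + ∑ k ∈ Finset.range (n + 1), (-1) ^ k * (n.choose k : R) := by
        rw [← Finset.sum_neg_distrib, ← Finset.sum_add_distrib]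
        exact Finset.sum_congr rfl fun k _ => by ring
    _ = -(1 - x) ^ n := by rw [halt, add_zero, hbinom]

lemma abs_one_sub_pow_div_log_le_one {n : ℕ} (hn : n ≠ 0) {x : ℝ} (hx : x ∈ Ioo 0 1) :
    |(1 - x) ^ n / log x| ≤ 1 := by
  have hlog : log x < 0 := log_neg hx.1 hx.2
  have hpow : (1 - x) ^ n ≤ 1 - x :=
    pow_le_of_le_one (by linarith [hx.2]) (by linarith [hx.1]) hn
  have hx_log : 1 - x ≤ -log x := by linarith [log_le_sub_one_of_pos hx.1]
  rw [abs_div, abs_of_nonneg (pow_nonneg (by linarith [hx.2]) _), abs_of_neg hlog,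
    div_le_one (by linarith)]
  linarith

lemma continuousOn_one_sub_pow_div_log (n : ℕ) :
    ContinuousOn (fun x : ℝ => (1 - x) ^ n / log x) (Ioo 0 1) :=
  (continuous_const.sub continuous_id |>.pow n).continuousOn.div continuousOn_log_Ioo_zero_one
    fun _ hx => (log_neg hx.1 hx.2).ne

lemma integrableOn_one_sub_pow_div_log {n : ℕ} (hn : n ≠ 0) :
    IntegrableOn (fun x : ℝ => (1 - x) ^ n / log x) (Ioo 0 1) :=
  integrableOn_Ioo_of_continuousOn_of_abs_le (continuousOn_one_sub_pow_div_log n)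
    fun _ hx => abs_one_sub_pow_div_log_le_one hn hx

lemma sum_neg_one_pow_succ_mul_choose_mul_log {n : ℕ} (hn : n ≠ 0) :
    ∑ k ∈ Finset.range (n + 1), (-1 : ℝ) ^ (k + 1) * (n.choose k : ℝ) * log (k + 1)
      = -∫ x in Ioo (0 : ℝ) 1, (1 - x) ^ n / log x := by
  have hint : ∀ k : ℕ, IntegrableOn (fun x : ℝ => (x ^ k - 1) / log x) (Ioo 0 1) := fun k => by
    simpa using integrableOn_rpow_sub_one_div_log (Nat.cast_nonneg k)
  calc _ = ∑ k ∈ Finset.range (n + 1),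
        ∫ x in Ioo (0 : ℝ) 1, (-1) ^ (k + 1) * (n.choose k : ℝ) * ((x ^ k - 1) / log x) := by
        refine Finset.sum_congr rfl fun k _ => ?_
        rw [integral_const_mul, ← integral_rpow_sub_one_div_log (Nat.cast_nonneg k)]
        simp_rw [rpow_natCast]
    _ = -∫ x in Ioo (0 : ℝ) 1, (1 - x) ^ n / log x := by
        rw [← integral_finsetSum _ fun k _ => (hint k).const_mul _, ← integral_neg]
        refine integral_congr_ae (ae_of_all _ fun x => ?_)
        simp_rw [mul_div_assoc', ← Finset.sum_div,
          sum_neg_one_pow_succ_mul_choose_mul_pow_sub_one hn, neg_div]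

lemma one_sub_abs_le_one_sub_mul_one_sub {t x : ℝ} (hx : x ∈ Ioo 0 1) :
    1 - |t| ≤ 1 - t * (1 - x) := by
  have : t * (1 - x) ≤ |t| :=
    calc t * (1 - x) ≤ |t| * (1 - x) :=
          mul_le_mul_of_nonneg_right (le_abs_self t) (by linarith [hx.2])
      _ ≤ |t| := mul_le_of_le_one_right (abs_nonneg t) (by linarith [hx.1])
  linarith

lemma abs_one_sub_div_one_sub_mul_log_le {t x : ℝ} (ht : |t| < 1) (hx : x ∈ Ioo 0 1) :
    |(1 - x) / ((1 - t * (1 - x)) * log x)| ≤ (1 - |t|)⁻¹ := by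
  have hden := one_sub_abs_le_one_sub_mul_one_sub (t := t) hx
  rw [mul_comm, ← div_div, abs_div, abs_of_pos (a := 1 - t * (1 - x)) (by linarith),
    ← one_div]
  exact div_le_div₀ zero_le_one (by simpa using abs_one_sub_pow_div_log_le_one one_ne_zero hx)
    (by linarith) hden

lemma integrableOn_one_sub_div_one_sub_mul_log {t : ℝ} (ht : |t| < 1) :
    IntegrableOn (fun x : ℝ => (1 - x) / ((1 - t * (1 - x)) * log x)) (Ioo 0 1) := by
  refine integrableOn_Ioo_of_continuousOn_of_abs_le ?_
    fun _ hx => abs_one_sub_div_one_sub_mul_log_le ht hx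
  have hden : Continuous fun x : ℝ => 1 - t * (1 - x) := by fun_prop
  refine (continuous_const.sub continuous_id).continuousOn.div
    (hden.continuousOn.mul continuousOn_log_Ioo_zero_one)
    fun x hx => mul_ne_zero ?_ (log_neg hx.1 hx.2).ne
  linarith [one_sub_abs_le_one_sub_mul_one_sub (t := t) hx]

lemma hasSum_pow_add_two_mul_pow_succ {t y : ℝ} (h : |t * y| < 1) :
    HasSum (fun n : ℕ => t ^ (n + 2) * y ^ (n + 1)) (t ^ 2 * y / (1 - t * y)) := by
  have hterm : (fun n : ℕ => t ^ (n + 2) * y ^ (n + 1)) = fun n => t ^ 2 * y * (t * y) ^ n :=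
    funext fun n => by ring
  rw [hterm, div_eq_mul_inv]
  exact (hasSum_geometric_of_abs_lt_one h).mul_left _

lemma hasSum_pow_mul_integral_one_sub_pow_div_log {t : ℝ} (ht : |t| < 1) :
    HasSum (fun n : ℕ => t ^ (n + 2) * ∫ x in Ioo (0 : ℝ) 1, (1 - x) ^ (n + 1) / log x)
      (t ^ 2 * ∫ x in Ioo (0 : ℝ) 1, (1 - x) / ((1 - t * (1 - x)) * log x)) := by
  have hF_int : ∀ n : ℕ, IntegrableOn (fun x : ℝ => t ^ (n + 2) * ((1 - x) ^ (n + 1) / log x))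
      (Ioo 0 1) := fun n => (integrableOn_one_sub_pow_div_log n.succ_ne_zero).const_mul _
  have hnorm : ∀ n : ℕ,
      ∫ x in Ioo (0 : ℝ) 1, ‖t ^ (n + 2) * ((1 - x) ^ (n + 1) / log x)‖ ≤ |t| ^ (n + 2) := by
    intro n
    calc _ ≤ ∫ _ in Ioo (0 : ℝ) 1, |t| ^ (n + 2) :=
          setIntegral_mono_on (hF_int n).norm (integrableOn_const (by simp) (by simp))
            measurableSet_Ioo fun x hx => by
              rw [norm_mul, norm_pow, norm_eq_abs]
              exact mul_le_of_le_one_right (by positivity)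
                (abs_one_sub_pow_div_log_le_one n.succ_ne_zero hx)
      _ = |t| ^ (n + 2) := by simp
  have hsum : Summable fun n : ℕ =>
      ∫ x in Ioo (0 : ℝ) 1, ‖t ^ (n + 2) * ((1 - x) ^ (n + 1) / log x)‖ :=
    .of_nonneg_of_le (fun n => integral_nonneg fun _ => norm_nonneg _) hnorm
      ((summable_nat_add_iff 2).2 (summable_geometric_of_lt_one (abs_nonneg t) ht))
  have hpoint : ∀ x ∈ Ioo (0 : ℝ) 1,
      HasSum (fun n : ℕ => t ^ (n + 2) * ((1 - x) ^ (n + 1) / log x))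
        (t ^ 2 * ((1 - x) / ((1 - t * (1 - x)) * log x))) := by
    intro x hx
    have hlt : |t * (1 - x)| < 1 := by
      rw [abs_mul, abs_of_pos (a := 1 - x) (by linarith [hx.2])]
      exact (mul_le_of_le_one_right (abs_nonneg t) (by linarith [hx.1])).trans_lt ht
    have h := (hasSum_pow_add_two_mul_pow_succ hlt).div_const (log x)
    rw [show t ^ 2 * (1 - x) / (1 - t * (1 - x)) / log x
        = t ^ 2 * ((1 - x) / ((1 - t * (1 - x)) * log x)) by rw [div_div, mul_div_assoc]] at h
    simpa only [mul_div_assoc] using h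
  have key := hasSum_integral_of_summable_integral_norm hF_int hsum
  rw [setIntegral_congr_fun measurableSet_Ioo fun x hx => (hpoint x hx).tsum_eq,
    integral_const_mul] at key
  simpa only [integral_const_mul] using key

/-- For 0 < t < 1, ∑_{n=0}^∞ t^{n+1} ∑_{k=0}^n (−1)^{k+1} C(n,k) ln(k+1)
converges to −t² ∫_0^1 (1−x)/((1−t(1−x))·ln x) dx, with the integral convergent. -/
theorem stmt_13 (t : ℝ) (ht0 : 0 < t) (ht1 : t < 1) :
    IntegrableOn (fun x : ℝ => (1 - x) / ((1 - t * (1 - x)) * Real.log x)) (Set.Ioo 0 1) ∧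
      Tendsto (fun N : ℕ => ∑ n ∈ Finset.range N,
          t ^ (n + 1) * ∑ k ∈ Finset.range (n + 1),
            (-1 : ℝ) ^ (k + 1) * (n.choose k : ℝ) * Real.log (k + 1))
        atTop
        (nhds (-t ^ 2 * ∫ x in Set.Ioo (0:ℝ) 1,
          (1 - x) / ((1 - t * (1 - x)) * Real.log x))) := by
  have ht : |t| < 1 := abs_lt.2 ⟨by linarith, ht1⟩
  refine ⟨integrableOn_one_sub_div_one_sub_mul_log ht, ?_⟩
  -- the `n = 0` term vanishes since `log 1 = 0`
  refine ((hasSum_nat_add_iff' 1).1 ?_).tendsto_sum_nat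
  simpa [sum_neg_one_pow_succ_mul_choose_mul_log, neg_mul, mul_neg] using
    (hasSum_pow_mul_integral_one_sub_pow_div_log ht).neg
end

section
/- The double integral ∫_0^1 ∫_0^1 (1−x)/((1−t·(1−x))·ln x) dx dt converges and equals −1; equivalently, 1 = −∫_0^1 ∫_0^1 (1−x)/((1−t(1−x))·ln x) dx dt. -/
/-!
For fixed `x ∈ (0, 1)` the integrand is `((1 - x) / (1 - t (1 - x))) / log x`, whose
antiderivative in `t` is `-log (1 - t (1 - x)) / log x`; so every inner integral equals
`-log x / log x = -1`. The integrand is negative on the open square, hence Tonelli turns these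
finite inner integrals into integrability on the square, and Fubini gives the value `-1`.
-/

open MeasureTheory Real Set

namespace MeasureTheory

variable {α β : Type*} [MeasurableSpace α] [MeasurableSpace β] {μ : Measure α} {ν : Measure β}

theorem integrable_prod_of_nonneg_of_integrable_integral [SFinite μ] [SFinite ν] {f : α × β → ℝ}
    (hf : AEStronglyMeasurable f (μ.prod ν)) (hf₀ : ∀ᵐ y ∂ν, 0 ≤ᵐ[μ] fun x => f (x, y))
    (hslice : ∀ᵐ y ∂ν, Integrable (fun x => f (x, y)) μ)
    (hint : Integrable (fun y => ∫ x, f (x, y) ∂μ) ν) :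
    Integrable f (μ.prod ν) := by
  refine (integrable_prod_iff' hf).2 ⟨hslice, hint.congr ?_⟩
  filter_upwards [hf₀] with y hy
  refine integral_congr_ae ?_
  filter_upwards [hy] with x hx
  exact (Real.norm_of_nonneg hx).symm

end MeasureTheory

lemma one_sub_mul_pos {a t : ℝ} (ha : a < 1) (ht : t ∈ Icc (0 : ℝ) 1) : 0 < 1 - t * a := by
  obtain ⟨ht₀, ht₁⟩ := ht
  rcases le_or_gt a 0 with ha₀ | ha₀ <;> nlinarith

lemma continuousOn_div_one_sub_mul {a : ℝ} (ha : a < 1) :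
    ContinuousOn (fun t : ℝ => a / (1 - t * a)) (Icc 0 1) :=
  continuousOn_const.div (by fun_prop) fun _ ht => (one_sub_mul_pos ha ht).ne'

lemma integral_div_one_sub_mul {a : ℝ} (ha : a < 1) :
    ∫ t in (0 : ℝ)..1, a / (1 - t * a) = -log (1 - a) := by
  have hderiv : ∀ t ∈ uIcc (0 : ℝ) 1,
      HasDerivAt (fun t => -log (1 - t * a)) (a / (1 - t * a)) t := by
    intro t ht
    rw [uIcc_of_le zero_le_one] at ht
    have hlin : HasDerivAt (fun t : ℝ => 1 - t * a) (-a) t := by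
      simpa using (hasDerivAt_mul_const a).const_sub 1
    have h := (hlin.log (one_sub_mul_pos ha ht).ne').neg
    rwa [neg_div, neg_neg] at h
  rw [intervalIntegral.integral_eq_sub_of_hasDerivAt hderiv
    ((continuousOn_div_one_sub_mul ha).intervalIntegrable_of_Icc zero_le_one)]
  simp

noncomputable def guilleraIntegrand (t x : ℝ) : ℝ := (1 - x) / ((1 - t * (1 - x)) * log x)

section GuilleraIntegrand

variable {x : ℝ}

lemma guilleraIntegrand_eq_div_log (t x : ℝ) :
    guilleraIntegrand t x = (1 - x) / (1 - t * (1 - x)) / log x :=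
  div_mul_eq_div_div _ _ _

lemma measurable_guilleraIntegrand : Measurable fun p : ℝ × ℝ => guilleraIntegrand p.1 p.2 := by
  unfold guilleraIntegrand
  fun_prop

lemma integrableOn_guilleraIntegrand (hx : x ∈ Ioo (0 : ℝ) 1) :
    IntegrableOn (fun t => guilleraIntegrand t x) (Ioo 0 1) := by
  simp_rw [guilleraIntegrand_eq_div_log]
  exact ((continuousOn_div_one_sub_mul (by linarith [hx.1])).integrableOn_Icc.mono_set
    Ioo_subset_Icc_self).div_const _

lemma setIntegral_guilleraIntegrand (hx : x ∈ Ioo (0 : ℝ) 1) :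
    ∫ t in Ioo (0 : ℝ) 1, guilleraIntegrand t x = -1 := by
  have hlog : log x ≠ 0 := (log_neg hx.1 hx.2).ne
  simp_rw [guilleraIntegrand_eq_div_log]
  rw [integral_div, ← integral_Ioc_eq_integral_Ioo, ← intervalIntegral.integral_of_le zero_le_one,
    integral_div_one_sub_mul (by linarith [hx.1]), sub_sub_cancel, neg_div, div_self hlog]

lemma guilleraIntegrand_neg (hx : x ∈ Ioo (0 : ℝ) 1) {t : ℝ} (ht : t ∈ Icc (0 : ℝ) 1) :
    guilleraIntegrand t x < 0 :=
  div_neg_of_pos_of_neg (by linarith [hx.2])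
    (mul_neg_of_pos_of_neg (one_sub_mul_pos (by linarith [hx.1]) ht) (log_neg hx.1 hx.2))

end GuilleraIntegrand

/-- ∫_0^1 ∫_0^1 (1−x)/((1−t(1−x))·ln x) dx dt converges and equals −1. -/
theorem stmt_16 :
    IntegrableOn
        (fun p : ℝ × ℝ => (1 - p.2) / ((1 - p.1 * (1 - p.2)) * Real.log p.2))
        (Set.Ioo 0 1 ×ˢ Set.Ioo 0 1) ∧
      ∫ p in (Set.Ioo (0:ℝ) 1 ×ˢ Set.Ioo (0:ℝ) 1),
          (1 - p.2) / ((1 - p.1 * (1 - p.2)) * Real.log p.2) = -1 := by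
  set f : ℝ × ℝ → ℝ := fun p => guilleraIntegrand p.1 p.2
  change IntegrableOn f _ ∧ ∫ p in _, f p = -1
  set μ : Measure ℝ := volume.restrict (Ioo 0 1)
  have hμ : volume.restrict (Ioo (0 : ℝ) 1 ×ˢ Ioo (0 : ℝ) 1) = μ.prod μ := by
    rw [Measure.volume_eq_prod, Measure.prod_restrict]
  have hneg : Integrable (-f) (μ.prod μ) := by
    refine integrable_prod_of_nonneg_of_integrable_integral
      measurable_guilleraIntegrand.neg.aestronglyMeasurable ?_ ?_ ?_
    · filter_upwards [ae_restrict_mem measurableSet_Ioo] with x hx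
      filter_upwards [ae_restrict_mem measurableSet_Ioo] with t ht
      exact neg_nonneg.2 (guilleraIntegrand_neg hx (Ioo_subset_Icc_self ht)).le
    · filter_upwards [ae_restrict_mem measurableSet_Ioo] with x hx
      exact (integrableOn_guilleraIntegrand hx).neg
    · refine (integrable_const (1 : ℝ)).congr ?_
      filter_upwards [ae_restrict_mem measurableSet_Ioo] with x hx
      simp [f, integral_neg, setIntegral_guilleraIntegrand hx, μ]
  have hint : Integrable f (μ.prod μ) := by simpa using hneg.neg
  refine ⟨by rwa [IntegrableOn, hμ], ?_⟩
  rw [hμ, integral_prod_symm f hint,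
    setIntegral_congr_fun measurableSet_Ioo fun x hx => setIntegral_guilleraIntegrand hx]
  simp
end
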